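/- Under the bound m ≤ D_t ≤ M for all t, and for complex z with Re z ∈ (−δ, 1+δ) where δ = m/(M−m), the operator (1−z) D_s^{-1} + z D_t^{-1} is invertible and ‖((1−z)D_s^{-1} + z D_t^{-1})^{-1}‖ ≤ (M/2)·((M+m)/(M−m))·(δ + 1/2 − |Re z − 1/2|)^{-1}. -/

import Mathlib

/-!
Since `m ≤ D_t ≤ M` in the Loewner order and inversion is operator antitone,
`M⁻¹ ≤ D_t⁻¹ ≤ m⁻¹`. The real part of `⟪x, ((1 - z) D_s⁻¹ + z D_t⁻¹) x⟫` is therefore the affine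
combination `(1 - ρ) q_s + ρ q_t`, `ρ = Re z`, of two numbers in `[‖x‖² / M, ‖x‖² / m]`; for
`ρ ∈ (-δ, 1 + δ)` it is at least `‖x‖² / K`, with `K` the stated bound. A coercive operator on a
Hilbert space is invertible, with inverse of norm at most the reciprocal of the coercivity constant.
-/

open NormedSpace ComplexInnerProductSpace

/-- `D_t = e^{tL} D e^{tL*}` on the complexified Hilbert space. -/
noncomputable def DtC {H : Type*} [NormedAddCommGroup H] [InnerProductSpace ℂ H]
    [CompleteSpace H] (L D : H →L[ℂ] H) (t : ℝ) : H →L[ℂ] H :=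
  exp ((t : ℂ) • L) * D * ContinuousLinearMap.adjoint (exp ((t : ℂ) • L))

theorem le_affine_combination {a b q₁ q₂ : ℝ} (h₁ : q₁ ∈ Set.Icc a b) (h₂ : q₂ ∈ Set.Icc a b)
    (ρ : ℝ) : a - (b - a) * max 0 (|ρ - 1 / 2| - 1 / 2) ≤ (1 - ρ) * q₁ + ρ * q₂ := by
  obtain ⟨ha₁, hb₁⟩ := h₁
  obtain ⟨ha₂, hb₂⟩ := h₂
  rcases le_total ρ 0 with hρ | hρ
  · rw [abs_of_nonpos (by linarith), max_eq_right (by linarith)]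
    nlinarith [mul_nonneg (sub_nonneg.2 hρ) (sub_nonneg.2 hb₂)]
  rcases le_total ρ 1 with hρ' | hρ'
  · rw [max_eq_left (by rw [sub_nonpos, abs_le]; constructor <;> linarith)]
    nlinarith
  · rw [abs_of_nonneg (by linarith), max_eq_right (by linarith)]
    nlinarith

theorem inv_le_inv_sub_mul_max {m M u : ℝ} (hm : 0 < m) (hmM : m < M) (hu : 0 ≤ u)
    (hu' : u < m / (M - m) + 1 / 2) :
    (M / 2 * ((M + m) / (M - m)) * (m / (M - m) + 1 / 2 - u)⁻¹)⁻¹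
      ≤ M⁻¹ - (m⁻¹ - M⁻¹) * max 0 (u - 1 / 2) := by
  have hMm : 0 < M - m := by linarith
  have hM : 0 < M := hm.trans hmM
  have hδ : m / (M - m) + 1 / 2 = (M + m) / (2 * (M - m)) := by field_simp; ring
  rw [hδ] at hu' ⊢
  have hMu : (M - m) * u < (M + m) / 2 := by
    rw [lt_div_iff₀ (by positivity)] at hu'; nlinarith
  have hK_inv : (M / 2 * ((M + m) / (M - m)) * ((M + m) / (2 * (M - m)) - u)⁻¹)⁻¹
      = M⁻¹ - 2 * (M - m) * u / (M * (M + m)) := by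
    have : (M + m) / (2 * (M - m)) - u ≠ 0 := by
      rw [sub_ne_zero]; exact hu'.ne'
    field_simp
  rw [hK_inv, sub_le_sub_iff_left]
  rcases le_total u (1 / 2) with h | h
  · rw [max_eq_left (by linarith), mul_zero]; positivity
  · rw [max_eq_right (by linarith), inv_sub_inv hm.ne' hM.ne', div_mul_eq_mul_div,
      div_le_div_iff₀ (by positivity) (by positivity)]
    nlinarith [mul_pos hM hMm]

theorem CStarAlgebra.inv_mem_Icc_algebraMap {A : Type*} [CStarAlgebra A] [PartialOrder A]
    [StarOrderedRing A] {a : Aˣ} {r s : ℝ} (hr : 0 < r) (hs : 0 < s)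
    (ha : (a : A) ∈ Set.Icc (algebraMap ℝ A r) (algebraMap ℝ A s)) :
    (↑a⁻¹ : A) ∈ Set.Icc (algebraMap ℝ A s⁻¹) (algebraMap ℝ A r⁻¹) :=
  ⟨CStarAlgebra.inv_le_inv (b := (Units.mk0 s hs.ne').map (algebraMap ℝ A).toMonoidHom)
      ((algebraMap_nonneg A hr.le).trans ha.1) ha.2,
    CStarAlgebra.inv_le_inv (a := (Units.mk0 r hr.ne').map (algebraMap ℝ A).toMonoidHom)
      (algebraMap_nonneg A hr.le) ha.1⟩

namespace ContinuousLinearMap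

open scoped InnerProductSpace in
theorem exists_inverse_norm_le_of_coercive {𝕜 H : Type*} [RCLike 𝕜] [NormedAddCommGroup H]
    [InnerProductSpace 𝕜 H] [CompleteSpace H] {T : H →L[𝕜] H} {c : ℝ} (hc : 0 < c)
    (hT : ∀ x, c * ‖x‖ ^ 2 ≤ RCLike.re ⟪x, T x⟫_𝕜) :
    ∃ B : H →L[𝕜] H, T * B = 1 ∧ B * T = 1 ∧ ‖B‖ ≤ c⁻¹ := by
  lift c to NNReal using hc.le
  have hT' : ∀ x, ‖x‖ ^ 2 * c ≤ ‖⟪T x, x⟫_𝕜‖ := fun x ↦ by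
    rw [mul_comm, norm_inner_symm]
    exact (hT x).trans (RCLike.re_le_norm _)
  obtain ⟨u, rfl⟩ := isUnit_of_forall_le_norm_inner_map T hc hT'
  have hanti := antilipschitz_of_forall_le_inner_map (u : H →L[𝕜] H) hc hT'
  refine ⟨↑u⁻¹, u.mul_inv, u.inv_mul, opNorm_le_bound _ (by positivity) fun y ↦ ?_⟩
  have := hanti.le_mul_norm (map_zero _) ((↑u⁻¹ : H →L[𝕜] H) y)
  rwa [← mul_apply_eq_comp, u.mul_inv, one_apply_eq_self, NNReal.coe_inv] at this

variable {H : Type*} [NormedAddCommGroup H] [InnerProductSpace ℂ H]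

theorem re_inner_sub_algebraMap_apply (T : H →L[ℂ] H) (c : ℝ) (x : H) :
    (⟪(T - algebraMap ℝ (H →L[ℂ] H) c) x, x⟫).re = (⟪x, T x⟫).re - c * ‖x‖ ^ 2 := by
  rw [sub_apply, inner_sub_left, Complex.sub_re, Algebra.algebraMap_eq_smul_one, smul_apply,
    one_apply_eq_self, ← inner_conj_symm, Complex.conj_re, ← Complex.coe_smul, inner_smul_left,
    Complex.conj_ofReal, Complex.re_ofReal_mul, inner_self_eq_norm_sq_to_K]
  norm_cast

variable [CompleteSpace H]

theorem algebraMap_le_iff_forall_le_re_inner {T : H →L[ℂ] H} (hT : IsSelfAdjoint T) (c : ℝ) :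
    algebraMap ℝ (H →L[ℂ] H) c ≤ T ↔ ∀ x, c * ‖x‖ ^ 2 ≤ (⟪x, T x⟫).re := by
  rw [le_def, isPositive_def', and_iff_right (hT.sub (.algebraMap _ (.all c)))]
  simp only [reApplyInnerSelf_apply, RCLike.re_to_complex, re_inner_sub_algebraMap_apply,
    sub_nonneg]

theorem le_algebraMap_iff_forall_re_inner_le {T : H →L[ℂ] H} (hT : IsSelfAdjoint T) (c : ℝ) :
    T ≤ algebraMap ℝ (H →L[ℂ] H) c ↔ ∀ x, (⟪x, T x⟫).re ≤ c * ‖x‖ ^ 2 := by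
  rw [le_def, ← neg_sub, isPositive_def', and_iff_right (hT.sub (.algebraMap _ (.all c))).neg]
  simp only [reApplyInnerSelf_apply, RCLike.re_to_complex, neg_apply, inner_neg_left,
    Complex.neg_re, re_inner_sub_algebraMap_apply, neg_nonneg, sub_nonpos]

theorem mul_norm_sq_le_re_inner_affine_combination {Q₁ Q₂ : H →L[ℂ] H} {a b : ℝ}
    (h₁ : Q₁ ∈ Set.Icc (algebraMap ℝ _ a) (algebraMap ℝ _ b))
    (h₂ : Q₂ ∈ Set.Icc (algebraMap ℝ _ a) (algebraMap ℝ _ b)) (z : ℂ) (x : H) :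
    (a - (b - a) * max 0 (|z.re - 1 / 2| - 1 / 2)) * ‖x‖ ^ 2
      ≤ (⟪x, ((1 - z) • Q₁ + z • Q₂) x⟫).re := by
  have hQsa (Q) (hQ : Q ∈ Set.Icc (algebraMap ℝ (H →L[ℂ] H) a) (algebraMap ℝ _ b)) :
      IsSelfAdjoint Q := (IsSelfAdjoint.algebraMap _ (.all a)).of_ge hQ.1
  have hbox (Q) (hQ : Q ∈ Set.Icc (algebraMap ℝ (H →L[ℂ] H) a) (algebraMap ℝ _ b)) :
      (⟪x, Q x⟫).re ∈ Set.Icc (a * ‖x‖ ^ 2) (b * ‖x‖ ^ 2) :=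
    ⟨(algebraMap_le_iff_forall_le_re_inner (hQsa Q hQ) a).1 hQ.1 x,
      (le_algebraMap_iff_forall_re_inner_le (hQsa Q hQ) b).1 hQ.2 x⟩
  have him₁ : (⟪x, Q₁ x⟫).im = 0 := (hQsa Q₁ h₁).isSymmetric.im_inner_self_apply x
  have him₂ : (⟪x, Q₂ x⟫).im = 0 := (hQsa Q₂ h₂).isSymmetric.im_inner_self_apply x
  have hre : (⟪x, ((1 - z) • Q₁ + z • Q₂) x⟫).re
      = (1 - z.re) * (⟪x, Q₁ x⟫).re + z.re * (⟪x, Q₂ x⟫).re := by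
    simp [him₁, him₂]
  rw [hre]
  convert le_affine_combination (hbox Q₁ h₁) (hbox Q₂ h₂) z.re using 1
  ring

end ContinuousLinearMap

theorem isSelfAdjoint_DtC {H : Type*} [NormedAddCommGroup H] [InnerProductSpace ℂ H]
    [CompleteSpace H] (L : H →L[ℂ] H) {D : H →L[ℂ] H} (hD : IsSelfAdjoint D) (t : ℝ) :
    IsSelfAdjoint (DtC L D t) := by
  simpa [DtC, ContinuousLinearMap.star_eq_adjoint] using hD.conjugate (exp ((t : ℂ) • L))

/-- Under the uniform bounds `m ≤ D_t ≤ M` for all `t` (where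
`0 < m < M`, `δ = m/(M−m)`), for any complex `z` with `Re z ∈ (−δ, 1+δ)` the
operator `(1−z) D_s⁻¹ + z D_t⁻¹` is invertible on the complexified Hilbert space
with `‖((1−z)D_s⁻¹ + z D_t⁻¹)⁻¹‖ ≤ (M/2)·((M+m)/(M−m))·(δ + 1/2 − |Re z − 1/2|)⁻¹`.
`Dinv t` denotes the two-sided bounded inverse of `D_t`. -/
theorem stmt8 {H : Type*} [NormedAddCommGroup H] [InnerProductSpace ℂ H] [CompleteSpace H]
    (L D : H →L[ℂ] H) (hD : IsSelfAdjoint D) (m M : ℝ) (hm : 0 < m) (hmM : m < M)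
    (hbound : ∀ (t : ℝ) (x : H),
      m * ‖x‖ ^ 2 ≤ (⟪x, DtC L D t x⟫).re ∧ (⟪x, DtC L D t x⟫).re ≤ M * ‖x‖ ^ 2)
    (Dinv : ℝ → H →L[ℂ] H)
    (hDinv : ∀ t, DtC L D t * Dinv t = 1 ∧ Dinv t * DtC L D t = 1)
    (s t : ℝ) (z : ℂ) (hz : z.re ∈ Set.Ioo (-(m / (M - m))) (1 + m / (M - m))) :
    ∃ B : H →L[ℂ] H,
      ((1 - z) • Dinv s + z • Dinv t) * B = 1 ∧
      B * ((1 - z) • Dinv s + z • Dinv t) = 1 ∧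
      ‖B‖ ≤ M / 2 * ((M + m) / (M - m)) * (m / (M - m) + 1 / 2 - |z.re - 1 / 2|)⁻¹ := by
  have hM : 0 < M := hm.trans hmM
  have hDinv_mem (u : ℝ) :
      Dinv u ∈ Set.Icc (algebraMap ℝ (H →L[ℂ] H) M⁻¹) (algebraMap ℝ _ m⁻¹) := by
    have hDu := isSelfAdjoint_DtC L hD u
    exact CStarAlgebra.inv_mem_Icc_algebraMap (a := ⟨_, _, (hDinv u).1, (hDinv u).2⟩) hm hM
      ⟨(ContinuousLinearMap.algebraMap_le_iff_forall_le_re_inner hDu m).2 (hbound u · |>.1),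
        (ContinuousLinearMap.le_algebraMap_iff_forall_re_inner_le hDu M).2 (hbound u · |>.2)⟩
  have hu : |z.re - 1 / 2| < m / (M - m) + 1 / 2 := by
    rw [abs_lt]; constructor <;> linarith [hz.1, hz.2]
  set K := M / 2 * ((M + m) / (M - m)) * (m / (M - m) + 1 / 2 - |z.re - 1 / 2|)⁻¹
  have hK : 0 < K := by
    have : 0 < M - m := sub_pos.2 hmM
    have : 0 < m / (M - m) + 1 / 2 - |z.re - 1 / 2| := sub_pos.2 hu
    positivity
  simpa only [inv_inv] using ContinuousLinearMap.exists_inverse_norm_le_of_coercive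
    (inv_pos.2 hK) fun x ↦
      (mul_le_mul_of_nonneg_right (inv_le_inv_sub_mul_max hm hmM (abs_nonneg _) hu)
        (sq_nonneg _)).trans
      (ContinuousLinearMap.mul_norm_sq_le_re_inner_affine_combination
        (hDinv_mem s) (hDinv_mem t) z x)
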